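/- Let X be a compact metric space, T : X → X continuous, and let r > 0. Then the set R_r* = {f ∈ C(X,ℝ) : E_r^f is residual in X} is closed in C(X,ℝ), where E_r^f = {x ∈ X : limsup_{n→∞} (1/n) Σ_{i=0}^{n−1} f(T^i x) − liminf_{n→∞} (1/n) Σ_{i=0}^{n−1} f(T^i x) ≥ r}. Moreover, if ‖g − f‖ < r/3 and x ∈ E_r^f, then x ∈ E_{r/3}^g. -/

import Mathlib

open Filter Topology

/-!
Birkhoff averages are 1-Lipschitz in the observable for the sup norm, so their limsup and
liminf move by at most `‖g - f‖` and the oscillation `limsup - liminf` by at most `2 ‖g - f‖`.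
If `f_k → f` and every `E_r^{f_k}` is residual, then so is the countable intersection
`⋂ₖ E_r^{f_k}`, and at each of its points the oscillation of `f` is at least
`r - 2 ‖f_k - f‖ → r`.
-/

section LimsupLiminf

variable {ι : Type*} {l : Filter ι} [NeBot l] {u v : ι → ℝ} {c : ℝ}

lemma Filter.limsup_le_limsup_add (hu : IsBoundedUnder (· ≥ ·) l u)
    (hv : IsBoundedUnder (· ≤ ·) l v) (hv' : IsBoundedUnder (· ≥ ·) l v)
    (h : ∀ᶠ i in l, u i ≤ v i + c) :
    limsup u l ≤ limsup v l + c := by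
  rw [← limsup_add_const l v c hv hv'.isCoboundedUnder_le]
  exact limsup_le_limsup h hu.isCoboundedUnder_le (isBoundedUnder_le_add hv isBoundedUnder_const)

lemma Filter.liminf_le_liminf_add (hu : IsBoundedUnder (· ≥ ·) l u)
    (hv : IsBoundedUnder (· ≤ ·) l v) (hv' : IsBoundedUnder (· ≥ ·) l v)
    (h : ∀ᶠ i in l, u i ≤ v i + c) :
    liminf u l ≤ liminf v l + c := by
  rw [← liminf_add_const l v c hv.isCoboundedUnder_ge hv']
  exact liminf_le_liminf h hu (isBoundedUnder_le_add hv isBoundedUnder_const).isCoboundedUnder_ge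

lemma Filter.limsup_sub_liminf_le_add (hu : IsBoundedUnder (· ≤ ·) l u)
    (hu' : IsBoundedUnder (· ≥ ·) l u) (hv : IsBoundedUnder (· ≤ ·) l v)
    (hv' : IsBoundedUnder (· ≥ ·) l v) (h : ∀ᶠ i in l, |u i - v i| ≤ c) :
    limsup u l - liminf u l ≤ limsup v l - liminf v l + 2 * c := by
  have hsup : limsup u l ≤ limsup v l + c :=
    limsup_le_limsup_add hu' hv hv' <| h.mono fun i hi => by linarith [le_abs_self (u i - v i)]
  have hinf : liminf v l ≤ liminf u l + c :=
    liminf_le_liminf_add hv' hu hu' <| h.mono fun i hi => by linarith [neg_abs_le (u i - v i)]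
  linarith

end LimsupLiminf

section Birkhoff

variable {α E : Type*} [NormedAddCommGroup E] [NormedSpace ℝ E]

lemma norm_birkhoffAverage_le {g : α → E} {C : ℝ} (hg : ∀ x, ‖g x‖ ≤ C) (f : α → α) (n : ℕ)
    (x : α) : ‖birkhoffAverage ℝ f g n x‖ ≤ C := by
  rcases n.eq_zero_or_pos with rfl | hn
  · simpa using (norm_nonneg _).trans (hg x)
  have hsum : ‖birkhoffSum f g n x‖ ≤ n * C := by
    simpa [birkhoffSum] using norm_sum_le_of_le (Finset.range n) fun k _ => hg (f^[k] x)
  rw [birkhoffAverage, norm_smul, norm_inv, Real.norm_natCast, inv_mul_le_iff₀ (by positivity)]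
  exact hsum

noncomputable def birkhoffOscillation (f : α → α) (g : α → ℝ) (x : α) : ℝ :=
  limsup (birkhoffAverage ℝ f g · x) atTop - liminf (birkhoffAverage ℝ f g · x) atTop

lemma birkhoffOscillation_le_of_norm_sub_le {g g' : α → ℝ} {A A' c : ℝ} (hg : ∀ x, ‖g x‖ ≤ A)
    (hg' : ∀ x, ‖g' x‖ ≤ A') (hgg' : ∀ x, ‖g x - g' x‖ ≤ c) (f : α → α) (x : α) :
    birkhoffOscillation f g x ≤ birkhoffOscillation f g' x + 2 * c := by
  have bdd : ∀ {h : α → ℝ} {B : ℝ}, (∀ y, ‖h y‖ ≤ B) →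
      IsBoundedUnder (· ≤ ·) atTop (birkhoffAverage ℝ f h · x) ∧
        IsBoundedUnder (· ≥ ·) atTop (birkhoffAverage ℝ f h · x) := fun hB =>
    ⟨isBoundedUnder_of ⟨_, fun n => (abs_le.1 (norm_birkhoffAverage_le hB f n x)).2⟩,
      isBoundedUnder_of ⟨_, fun n => (abs_le.1 (norm_birkhoffAverage_le hB f n x)).1⟩⟩
  refine limsup_sub_liminf_le_add (bdd hg).1 (bdd hg).2 (bdd hg').1 (bdd hg').2
    (Eventually.of_forall fun n => ?_)
  simpa only [birkhoffAverage_sub, Pi.sub_apply, Real.norm_eq_abs] using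
    norm_birkhoffAverage_le (g := g - g') hgg' f n x

end Birkhoff

section ContinuousMap

variable {X : Type*} [TopologicalSpace X] [CompactSpace X]

lemma ContinuousMap.birkhoffOscillation_le_add_norm_sub (T : X → X) (f g : C(X, ℝ)) (x : X) :
    birkhoffOscillation T f x ≤ birkhoffOscillation T g x + 2 * ‖f - g‖ :=
  birkhoffOscillation_le_of_norm_sub_le f.norm_coe_le_norm g.norm_coe_le_norm
    (f - g).norm_coe_le_norm T x

theorem isClosed_setOf_residual_le_birkhoffOscillation (T : X → X) (r : ℝ) :
    IsClosed {f : C(X, ℝ) | {x | r ≤ birkhoffOscillation T f x} ∈ residual X} := by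
  refine isSeqClosed_iff_isClosed.mp fun F f hF hFf => ?_
  have hres : ∀ k, {x | r ≤ birkhoffOscillation T (F k) x} ∈ residual X := hF
  refine mem_of_superset (countable_iInter_mem.mpr hres) fun x hx => ?_
  have hxF : ∀ k, r ≤ birkhoffOscillation T (F k) x := Set.mem_iInter.mp hx
  have hdist : Tendsto (fun k => ‖F k - f‖) atTop (𝓝 0) :=
    tendsto_iff_norm_sub_tendsto_zero.mp hFf
  have hlim : Tendsto (fun k => r - 2 * ‖F k - f‖) atTop (𝓝 r) := by
    simpa using tendsto_const_nhds.sub (hdist.const_mul 2)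
  refine le_of_tendsto hlim (Eventually.of_forall fun k => ?_)
  linarith [hxF k, ContinuousMap.birkhoffOscillation_le_add_norm_sub T (F k) f x]

end ContinuousMap

theorem stmt15_general {X : Type*} [MetricSpace X] [CompactSpace X]
    (T : X → X) (r : ℝ) :
    IsClosed {f : C(X, ℝ) |
      {x : X | r ≤ Filter.limsup
            (fun n : ℕ => (n : ℝ)⁻¹ * ∑ i ∈ Finset.range n, f (T^[i] x)) atTop
          - Filter.liminf
            (fun n : ℕ => (n : ℝ)⁻¹ * ∑ i ∈ Finset.range n, f (T^[i] x)) atTop}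
        ∈ residual X} ∧
    ∀ (f g : C(X, ℝ)) (x : X), ‖g - f‖ < r / 3 →
      r ≤ Filter.limsup (fun n : ℕ => (n : ℝ)⁻¹ * ∑ i ∈ Finset.range n, f (T^[i] x)) atTop
        - Filter.liminf (fun n : ℕ => (n : ℝ)⁻¹ * ∑ i ∈ Finset.range n, f (T^[i] x)) atTop →
      r / 3 ≤ Filter.limsup (fun n : ℕ => (n : ℝ)⁻¹ * ∑ i ∈ Finset.range n, g (T^[i] x)) atTop
        - Filter.liminf (fun n : ℕ => (n : ℝ)⁻¹ * ∑ i ∈ Finset.range n, g (T^[i] x)) atTop := by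
  refine ⟨isClosed_setOf_residual_le_birkhoffOscillation T r, fun f g x hgf hf => ?_⟩
  change r ≤ birkhoffOscillation T f x at hf
  change r / 3 ≤ birkhoffOscillation T g x
  linarith [ContinuousMap.birkhoffOscillation_le_add_norm_sub T f g x, norm_sub_rev g f]

theorem stmt15 {X : Type*} [MetricSpace X] [CompactSpace X]
    (T : X → X) (hT : Continuous T) (r : ℝ) (hr : 0 < r) :
    IsClosed {f : C(X, ℝ) |
      {x : X | r ≤ Filter.limsup
            (fun n : ℕ => (n : ℝ)⁻¹ * ∑ i ∈ Finset.range n, f (T^[i] x)) atTop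
          - Filter.liminf
            (fun n : ℕ => (n : ℝ)⁻¹ * ∑ i ∈ Finset.range n, f (T^[i] x)) atTop}
        ∈ residual X} ∧
    ∀ (f g : C(X, ℝ)) (x : X), ‖g - f‖ < r / 3 →
      r ≤ Filter.limsup (fun n : ℕ => (n : ℝ)⁻¹ * ∑ i ∈ Finset.range n, f (T^[i] x)) atTop
        - Filter.liminf (fun n : ℕ => (n : ℝ)⁻¹ * ∑ i ∈ Finset.range n, f (T^[i] x)) atTop →
      r / 3 ≤ Filter.limsup (fun n : ℕ => (n : ℝ)⁻¹ * ∑ i ∈ Finset.range n, g (T^[i] x)) atTop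
        - Filter.liminf (fun n : ℕ => (n : ℝ)⁻¹ * ∑ i ∈ Finset.range n, g (T^[i] x)) atTop :=
  stmt15_general T r
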